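/- For each fixed x > 0, the Mainardi function value M_{α/2}(x) tends to (1/√π)·exp(−x²/4) as α → 1⁻. -/

import Mathlib

open Real Filter Set

/-- The Wright function `W(x,a,b)`, with the convention that `1/Gamma` vanishes at
the nonpositive integers (in Mathlib, `Real.Gamma` is `0` there, and division by
`0` is `0`). -/
noncomputable def wright (x a b : ℝ) : ℝ :=
  ∑' k : ℕ, x ^ k / (Nat.factorial k * Real.Gamma (a * k + b))

/-- The Mainardi function `M_ν(x) = W(−x, −ν, 1−ν)`. -/
noncomputable def mainardi (ν x : ℝ) : ℝ := wright (-x) (-ν) (1 - ν)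

/-- The error function `erf(x) = (2/√π) ∫₀ˣ exp(−s²) ds`. -/
noncomputable def erf (x : ℝ) : ℝ :=
  2 / Real.sqrt Real.pi * ∫ s in (0:ℝ)..x, Real.exp (-s ^ 2)

/-!
Dominated convergence for series. With `t = α (k + 1) / 2`, the `k`-th term of `M_{α/2}(x)` is
`(-x)^k / (k! Γ(1 - t))`. The reflection formula gives `|1 / Γ(1 - t)| ≤ Γ(t) / π`, and for
`α ∈ [1/2, 1]` convexity of `Γ` bounds `Γ(t)` by `Γ(1/4) + Γ((k + 1)/2)`; Legendre's duplication
formula turns `Γ((k + 1)/2) / k!` into `√π / (2^k Γ(k/2 + 1))`, so the terms have a summable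
majorant independent of `α`. At `α = 1` the odd terms vanish (`1/Γ` vanishes at `-m`) and the even
terms are `(-x²/4)^m / (√π m!)`, the exponential series.
-/

open scoped Nat

namespace Real

theorem continuous_inv_Gamma : Continuous fun s : ℝ => (Gamma s)⁻¹ := by
  have hC : Continuous fun s : ℂ => (Complex.Gamma s)⁻¹ := by
    simpa only [one_div] using Complex.differentiable_one_div_Gamma.continuous
  refine (Complex.continuous_re.comp (hC.comp Complex.continuous_ofReal)).congr fun s => ?_
  simp only [Function.comp_apply, Complex.Gamma_ofReal, ← Complex.ofReal_inv, Complex.ofReal_re]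

-- Holds also when `sin (π t) = 0`: then `1 - t` is a nonpositive integer, where `Γ` is `0`.
theorem inv_Gamma_one_sub {t : ℝ} (ht : 0 < t) :
    (Gamma (1 - t))⁻¹ = Gamma t * sin (π * t) / π := by
  have hΓ : Gamma t ≠ 0 := (Gamma_pos_of_pos ht).ne'
  rw [eq_div_of_mul_eq hΓ ((mul_comm _ _).trans (Gamma_mul_Gamma_one_sub t)), inv_div,
    div_div_eq_mul_div]

theorem abs_inv_Gamma_one_sub_le {a b t : ℝ} (ha : 0 < a) (hat : a ≤ t) (htb : t ≤ b) :
    |(Gamma (1 - t))⁻¹| ≤ max (Gamma a) (Gamma b) / π := by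
  have ht : 0 < t := ha.trans_le hat
  rw [inv_Gamma_one_sub ht, abs_div, abs_mul, abs_of_pos (Gamma_pos_of_pos ht), abs_of_pos pi_pos]
  gcongr
  calc Gamma t * |sin (π * t)| ≤ Gamma t :=
        mul_le_of_le_one_right (Gamma_pos_of_pos ht).le (abs_sin_le_one _)
    _ ≤ max (Gamma a) (Gamma b) :=
      convexOn_Gamma.le_max_of_mem_Icc ha (ha.trans_le (hat.trans htb)) ⟨hat, htb⟩

theorem Gamma_mul_Gamma_half_add_one (k : ℕ) :
    Gamma ((k + 1) / 2) * Gamma (k / 2 + 1) = k ! * √π / 2 ^ k := by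
  have h := Gamma_mul_Gamma_add_half ((k + 1) / 2)
  rw [show ((k : ℝ) + 1) / 2 + 1 / 2 = k / 2 + 1 by ring,
    show 2 * (((k : ℝ) + 1) / 2) = k + 1 by ring, Gamma_nat_eq_factorial,
    show (1 : ℝ) - (k + 1) = -k by ring, rpow_neg zero_le_two, rpow_natCast] at h
  rw [h, div_eq_mul_inv]
  ring

theorem summable_pow_div_Gamma_half_add_one (y : ℝ) :
    Summable fun k : ℕ => y ^ k / Gamma (k / 2 + 1) := by
  apply Summable.even_add_odd
  · convert summable_pow_div_factorial (y ^ 2) using 2 with m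
    rw [← pow_mul, ← Gamma_nat_eq_factorial]
    push_cast
    ring_nf
  · refine .of_norm_bounded_eventually_nat ((summable_pow_div_factorial (y ^ 2)).mul_left |y|) ?_
    filter_upwards [eventually_ge_atTop 1] with m hm
    have hm' : (1 : ℝ) ≤ m := by exact_mod_cast hm
    have hfac : (m ! : ℝ) ≤ Gamma (((2 * m + 1 : ℕ) : ℝ) / 2 + 1) := by
      rw [← Gamma_nat_eq_factorial]
      exact Gamma_strictMonoOn_Ici.monotoneOn (by rw [mem_Ici]; linarith)
        (by rw [mem_Ici]; push_cast; linarith) (by push_cast; linarith)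
    rw [norm_div, norm_pow, Real.norm_eq_abs, Real.norm_eq_abs,
      abs_of_pos (Gamma_pos_of_pos (by positivity)), pow_succ, pow_mul, sq_abs, mul_comm,
      mul_div_assoc]
    gcongr

end Real

noncomputable def wrightTerm (x a b : ℝ) (k : ℕ) : ℝ := x ^ k / (k ! * Gamma (a * k + b))

theorem continuous_wrightTerm (x : ℝ) (k : ℕ) {a b : ℝ → ℝ} (ha : Continuous a)
    (hb : Continuous b) : Continuous fun α => wrightTerm x (a α) (b α) k := by
  simp only [wrightTerm, div_eq_mul_inv, mul_inv]
  exact continuous_const.mul (continuous_const.mul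
    (continuous_inv_Gamma.comp ((ha.mul continuous_const).add hb)))

theorem wrightTerm_mainardi_one_half_even (x : ℝ) (m : ℕ) :
    wrightTerm (-x) (-(1 / 2)) (1 - 1 / 2) (2 * m) = 1 / √π * ((-x ^ 2 / 4) ^ m / m !) := by
  have hm : -(1 / 2) * ((2 * m : ℕ) : ℝ) + (1 - 1 / 2) = 1 - (m + 1 / 2) := by push_cast; ring
  have hsin : sin (π * (m + 1 / 2)) = (-1) ^ m := by
    rw [show π * (m + 1 / 2) = m * π + π / 2 by ring, sin_add_pi_div_two, cos_nat_mul_pi]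
  have hΓ : Gamma (m + 1 / 2) = (2 * m) ! * √π / 4 ^ m / m ! := by
    rw [eq_div_iff (by positivity), ← Gamma_nat_eq_factorial]
    convert Gamma_mul_Gamma_half_add_one (2 * m) using 2 <;> push_cast <;> ring_nf
    rw [pow_mul']
    norm_num
  rw [wrightTerm, hm, ← div_div, div_eq_mul_inv _ (Gamma _), inv_Gamma_one_sub (by positivity),
    hsin, hΓ, ← sqrt_div_self', div_pow, neg_pow (x ^ 2), ← pow_mul, (even_two_mul m).neg_pow]
  field_simp

theorem wrightTerm_mainardi_one_half_odd (x : ℝ) (m : ℕ) :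
    wrightTerm (-x) (-(1 / 2)) (1 - 1 / 2) (2 * m + 1) = 0 := by
  have hm : -(1 / 2) * ((2 * m + 1 : ℕ) : ℝ) + (1 - 1 / 2) = -m := by push_cast; ring
  rw [wrightTerm, hm, Gamma_neg_nat_eq_zero, mul_zero, div_zero]

theorem mainardi_one_half (x : ℝ) : mainardi (1 / 2) x = 1 / √π * exp (-x ^ 2 / 4) := by
  show ∑' k, wrightTerm (-x) (-(1 / 2)) (1 - 1 / 2) k = _
  have hexp := (NormedSpace.expSeries_div_hasSum_exp (-x ^ 2 / 4)).mul_left (1 / √π)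
  rw [← exp_eq_exp_ℝ] at hexp
  refine (HasSum.tsum_eq ?_).trans (add_zero _)
  refine HasSum.even_add_odd ?_ ?_
  · simpa only [wrightTerm_mainardi_one_half_even] using hexp
  · simpa only [wrightTerm_mainardi_one_half_odd] using hasSum_zero

noncomputable def mainardiMajorant (x : ℝ) (k : ℕ) : ℝ :=
  Gamma (1 / 4) / π * (|x| ^ k / k !) + 1 / √π * ((|x| / 2) ^ k / Gamma (k / 2 + 1))

theorem summable_mainardiMajorant (x : ℝ) : Summable (mainardiMajorant x) :=
  ((summable_pow_div_factorial |x|).mul_left _).add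
    ((summable_pow_div_Gamma_half_add_one (|x| / 2)).mul_left _)

theorem abs_wrightTerm_mainardi_le (x : ℝ) (k : ℕ) {α : ℝ} (hα₁ : 1 / 2 ≤ α)
    (hα₂ : α ≤ 1) :
    |wrightTerm (-x) (-(α / 2)) (1 - α / 2) k| ≤ mainardiMajorant x k := by
  set t := α * (k + 1) / 2
  have hk : (0 : ℝ) ≤ k := k.cast_nonneg
  have harg : -(α / 2) * k + (1 - α / 2) = 1 - t := by ring
  have hΓ : |(Gamma (1 - t))⁻¹| ≤ (Gamma (1 / 4) + Gamma ((k + 1) / 2)) / π := by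
    refine (abs_inv_Gamma_one_sub_le (a := 1 / 4) (b := (k + 1) / 2) (by norm_num) (by nlinarith)
      (by nlinarith)).trans ?_
    gcongr
    exact max_le_add_of_nonneg (Gamma_pos_of_pos (by norm_num)).le
      (Gamma_pos_of_pos (by positivity)).le
  have hdup : Gamma ((k + 1) / 2) = k ! * √π / 2 ^ k / Gamma (k / 2 + 1) :=
    eq_div_of_mul_eq (Gamma_pos_of_pos (by positivity)).ne' (Gamma_mul_Gamma_half_add_one k)
  calc |wrightTerm (-x) (-(α / 2)) (1 - α / 2) k|
      = |x| ^ k / k ! * |(Gamma (1 - t))⁻¹| := by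
        rw [wrightTerm, harg, ← div_div, div_eq_mul_inv _ (Gamma _), abs_mul, abs_div, abs_pow,
          abs_neg, Nat.abs_cast]
    _ ≤ |x| ^ k / k ! * ((Gamma (1 / 4) + Gamma ((k + 1) / 2)) / π) := by gcongr
    _ = mainardiMajorant x k := by
      rw [mainardiMajorant, hdup, ← sqrt_div_self', div_pow]
      field_simp

theorem mainardi_tendsto_gaussian_general (x : ℝ) :
    Tendsto (fun α : ℝ => mainardi (α / 2) x)
      (nhdsWithin 1 (Set.Ioo 0 1))
      (nhds (1 / Real.sqrt Real.pi * Real.exp (-x ^ 2 / 4))) := by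
  rw [← mainardi_one_half]
  have hterm (k : ℕ) : Tendsto (fun α => wrightTerm (-x) (-(α / 2)) (1 - α / 2) k)
      (nhdsWithin 1 (Ioo 0 1)) (nhds (wrightTerm (-x) (-(1 / 2)) (1 - 1 / 2) k)) :=
    ((continuous_wrightTerm (-x) k (by fun_prop) (by fun_prop)).tendsto 1).mono_left
      nhdsWithin_le_nhds
  have hbound : ∀ᶠ α in nhdsWithin 1 (Ioo 0 1), ∀ k,
      ‖wrightTerm (-x) (-(α / 2)) (1 - α / 2) k‖ ≤ mainardiMajorant x k := by
    filter_upwards [self_mem_nhdsWithin, nhdsWithin_le_nhds (Ioi_mem_nhds one_half_lt_one)]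
      with α hα hα' k
    exact abs_wrightTerm_mainardi_le x k (le_of_lt hα') hα.2.le
  exact tendsto_tsum_of_dominated_convergence (summable_mainardiMajorant x) hterm hbound

theorem mainardi_tendsto_gaussian (x : ℝ) (hx : 0 < x) :
    Tendsto (fun α : ℝ => mainardi (α / 2) x)
      (nhdsWithin 1 (Set.Ioo 0 1))
      (nhds (1 / Real.sqrt Real.pi * Real.exp (-x ^ 2 / 4))) :=
  mainardi_tendsto_gaussian_general x
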